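/- Exactness of the non-Markovian two-level method under T-orthogonality of the fine basis: in addition to the hypotheses defining the non-Markovian approximation ε^{(k)} (R an n_c×n matrix, A_σ := RÂP' invertible with P' := Σ_{ℓ=0}^{k} P^{(ℓ)}, s_σ^{(k)} := −Σ_{ℓ=0}^{k} (RÂP^{(ℓ)})(P†x^{(k)} − P†x^{(k−ℓ)}), ε_σ^{(k)} := A_σ^{−1}(R r̂^{(k)} + s_σ^{(k)}), ε^{(k)} := Σ_{ℓ=0}^{k} P^{(ℓ)}(ε_σ^{(k)} + P†x^{(k)} − P†x^{(k−ℓ)})), assume Q†TQ = 0 and k ≥ 1. Then ε^{(k)} = e^{(k)}, i.e., the two-level method is exact. -/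

import Mathlib

open Matrix

private lemma aux_sum_mulVec {α : Type*} [Fintype α] {β : Type*} [Fintype β] {ι : Type*}
    (s : Finset ι) (f : ι → Matrix α β ℂ) (v : β → ℂ) :
    (∑ i ∈ s, f i) *ᵥ v = ∑ i ∈ s, f i *ᵥ v := by
  induction s using Finset.cons_induction with
  | empty => simp [Matrix.zero_mulVec]
  | cons a s ha ih => simp [Finset.sum_cons, Matrix.add_mulVec, ih]

private lemma aux_mulVec_sum {α : Type*} [Fintype α] {β : Type*} [Fintype β] {ι : Type*}
    (s : Finset ι) (M : Matrix α β ℂ) (v : ι → β → ℂ) :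
    M *ᵥ (∑ i ∈ s, v i) = ∑ i ∈ s, M *ᵥ v i := by
  induction s using Finset.cons_induction with
  | empty => simp [Matrix.mulVec_zero]
  | cons a s ha ih => simp [Finset.sum_cons, Matrix.mulVec_add, ih]

/-- Exactness of the non-Markovian two-level method under `T`-orthogonality of the fine
basis: under the hypotheses defining the non-Markovian approximation `ε^{(k)}`, if
`Q†TQ = 0` and `k ≥ 1`, then `ε^{(k)} = e^{(k)}`. -/
theorem non_markovian_exactness
    (n nc nf : ℕ) (hn : 0 < n) (hnc : 0 < nc) (hnf : 0 < nf) (hsum : n = nc + nf)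
    (A M : Matrix (Fin n) (Fin n) ℂ) (hA : IsUnit A)
    (b : Fin n → ℂ) (x : Fin n → ℂ) (hx : x = A⁻¹ *ᵥ b)
    (xs : ℕ → Fin n → ℂ)
    (hxs : ∀ ℓ : ℕ, xs (ℓ + 1) = xs ℓ + M *ᵥ (b - A *ᵥ xs ℓ))
    (e : ℕ → Fin n → ℂ) (he : ∀ ℓ, e ℓ = x - xs ℓ)
    (Ahat : Matrix (Fin n) (Fin n) ℂ) (hAhat : Ahat = M * A)
    (T : Matrix (Fin n) (Fin n) ℂ) (hT : T = 1 - Ahat)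
    (rhat : ℕ → Fin n → ℂ) (hrhat : ∀ ℓ, rhat ℓ = xs (ℓ + 1) - xs ℓ)
    (P : Matrix (Fin n) (Fin nc) ℂ) (Q : Matrix (Fin n) (Fin nf) ℂ)
    (Pd : Matrix (Fin nc) (Fin n) ℂ) (Qd : Matrix (Fin nf) (Fin n) ℂ)
    (hPdP : Pd * P = 1) (hQdQ : Qd * Q = 1) (hQdP : Qd * P = 0) (hPdQ : Pd * Q = 0)
    (hcomp : P * Pd + Q * Qd = 1)
    (Pgen : ℕ → Matrix (Fin n) (Fin nc) ℂ)
    (hPgen0 : Pgen 0 = P)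
    (hPgenS : ∀ ℓ : ℕ, Pgen (ℓ + 1) = Q * (Qd * T * Q) ^ ℓ * (Qd * T * P))
    (R : Matrix (Fin nc) (Fin n) ℂ)
    (k : ℕ)
    (P' : Matrix (Fin n) (Fin nc) ℂ)
    (hP' : P' = ∑ ℓ ∈ Finset.range (k + 1), Pgen ℓ)
    (Aσ : Matrix (Fin nc) (Fin nc) ℂ) (hAσ : Aσ = R * Ahat * P')
    (hAσinv : IsUnit Aσ)
    (sσ : Fin nc → ℂ)
    (hsσ : sσ = -∑ ℓ ∈ Finset.range (k + 1),
        (R * Ahat * Pgen ℓ) *ᵥ (Pd *ᵥ xs k - Pd *ᵥ xs (k - ℓ)))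
    (εσ : Fin nc → ℂ) (hεσ : εσ = Aσ⁻¹ *ᵥ (R *ᵥ rhat k + sσ))
    (ε : Fin n → ℂ)
    (hε : ε = ∑ ℓ ∈ Finset.range (k + 1),
        Pgen ℓ *ᵥ (εσ + Pd *ᵥ xs k - Pd *ᵥ xs (k - ℓ)))
    (hQTQ : Qd * T * Q = 0) (hk : 1 ≤ k) :
    ε = e k := by
  have hk1 : k - 1 + 1 = k := Nat.succ_pred_eq_of_pos hk
  have hAdet : IsUnit A.det := (Matrix.isUnit_iff_isUnit_det A).mp hA
  have hAx : A *ᵥ x = b := by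
    rw [hx, Matrix.mulVec_mulVec, Matrix.mul_nonsing_inv A hAdet, Matrix.one_mulVec]
  -- residual identity
  have hMb : ∀ ℓ, M *ᵥ (b - A *ᵥ xs ℓ) = Ahat *ᵥ e ℓ := by
    intro ℓ
    rw [he, hAhat, ← Matrix.mulVec_mulVec, Matrix.mulVec_sub A, hAx]
  -- error propagation
  have heT : ∀ ℓ, e (ℓ + 1) = T *ᵥ e ℓ := by
    intro ℓ
    rw [he (ℓ + 1), hxs, hMb, hT, Matrix.sub_mulVec, Matrix.one_mulVec, he ℓ]
    abel
  have hrh : rhat k = Ahat *ᵥ e k := by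
    rw [hrhat, hxs, hMb]; abel
  -- completeness on vectors
  have hcompVec : ∀ v : Fin n → ℂ, P *ᵥ (Pd *ᵥ v) + Q *ᵥ (Qd *ᵥ v) = v := by
    intro v
    rw [Matrix.mulVec_mulVec, Matrix.mulVec_mulVec, ← Matrix.add_mulVec, hcomp,
      Matrix.one_mulVec]
  -- fine component of the error
  have hQde : Q *ᵥ (Qd *ᵥ e k) = (Q * (Qd * T * P)) *ᵥ (Pd *ᵥ e (k - 1)) := by
    have h1 := heT (k - 1)
    rw [hk1] at h1
    calc Q *ᵥ (Qd *ᵥ e k)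
        = Q *ᵥ (Qd *ᵥ (T *ᵥ (P *ᵥ (Pd *ᵥ e (k-1)) + Q *ᵥ (Qd *ᵥ e (k-1))))) := by
          rw [hcompVec, ← h1]
      _ = Q *ᵥ ((Qd * T * P) *ᵥ (Pd *ᵥ e (k-1)) + (Qd * T * Q) *ᵥ (Qd *ᵥ e (k-1))) := by
          rw [Matrix.mulVec_add, Matrix.mulVec_add]
          simp only [Matrix.mulVec_mulVec, Matrix.mul_assoc]
      _ = (Q * (Qd * T * P)) *ᵥ (Pd *ᵥ e (k - 1)) := by
          rw [hQTQ, Matrix.zero_mulVec, add_zero, Matrix.mulVec_mulVec]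
  -- generalized prolongations vanish for ℓ ≥ 2
  have hPgenZ : ∀ ℓ, 2 ≤ ℓ → Pgen ℓ = 0 := by
    intro ℓ hℓ
    obtain ⟨m, rfl⟩ : ∃ m, ℓ = m + 2 := ⟨ℓ - 2, by omega⟩
    rw [hPgenS, hQTQ, pow_succ, mul_zero, Matrix.mul_zero, Matrix.zero_mul]
  -- key decomposition of the error
  have hdecomp : e k = ∑ ℓ ∈ Finset.range (k + 1), Pgen ℓ *ᵥ (Pd *ᵥ e (k - ℓ)) := by
    have hsub : Finset.range 2 ⊆ Finset.range (k + 1) := by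
      intro i hi; simp only [Finset.mem_range] at *; omega
    rw [← Finset.sum_subset hsub (fun i _ hi => by
      rw [hPgenZ i (by simp at hi; omega), Matrix.zero_mulVec])]
    rw [Finset.sum_range_succ, Finset.sum_range_one, hPgen0, hPgenS, pow_zero,
      Matrix.mul_one, ← hQde]
    simp only [Nat.sub_zero]
    exact (hcompVec (e k)).symm
  -- εσ equals the coarse error
  have hAσdet : IsUnit Aσ.det := (Matrix.isUnit_iff_isUnit_det Aσ).mp hAσinv
  have hPdxs : ∀ ℓ ∈ Finset.range (k + 1),
      Pd *ᵥ xs k - Pd *ᵥ xs (k - ℓ) = Pd *ᵥ e (k - ℓ) - Pd *ᵥ e k := by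
    intro ℓ _
    rw [he, he, Matrix.mulVec_sub, Matrix.mulVec_sub]
    abel
  have hkey : Aσ *ᵥ (Pd *ᵥ e k) = R *ᵥ rhat k + sσ := by
    have hL : Aσ *ᵥ (Pd *ᵥ e k)
        = ∑ ℓ ∈ Finset.range (k + 1), (R * Ahat * Pgen ℓ) *ᵥ (Pd *ᵥ e k) := by
      rw [hAσ, hP', Matrix.mul_sum, aux_sum_mulVec]
    have hR : R *ᵥ rhat k
        = ∑ ℓ ∈ Finset.range (k + 1), (R * Ahat * Pgen ℓ) *ᵥ (Pd *ᵥ e (k - ℓ)) := by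
      rw [hrh, Matrix.mulVec_mulVec]
      conv_lhs => rw [hdecomp]
      rw [aux_mulVec_sum]
      exact Finset.sum_congr rfl fun ℓ _ => by
        rw [Matrix.mulVec_mulVec, Matrix.mul_assoc]
    have hterm : ∀ ℓ ∈ Finset.range (k + 1),
        (R * Ahat * Pgen ℓ) *ᵥ (Pd *ᵥ e k)
          = (R * Ahat * Pgen ℓ) *ᵥ (Pd *ᵥ e (k - ℓ))
            - (R * Ahat * Pgen ℓ) *ᵥ (Pd *ᵥ xs k - Pd *ᵥ xs (k - ℓ)) := by
      intro ℓ hℓ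
      rw [hPdxs ℓ hℓ, Matrix.mulVec_sub]
      abel
    rw [hL, hR, hsσ, Finset.sum_congr rfl hterm, Finset.sum_sub_distrib, sub_eq_add_neg]
  have hεσe : εσ = Pd *ᵥ e k := by
    rw [hεσ, ← hkey, Matrix.mulVec_mulVec, Matrix.nonsing_inv_mul Aσ hAσdet,
      Matrix.one_mulVec]
  -- conclude
  rw [hε, hdecomp]
  refine Finset.sum_congr rfl fun ℓ hℓ => ?_
  have harg : εσ + Pd *ᵥ xs k - Pd *ᵥ xs (k - ℓ) = Pd *ᵥ e (k - ℓ) := by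
    rw [hεσe, add_sub_assoc, hPdxs ℓ hℓ]
    abel
  rw [harg]
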